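/- arXiv:2208.10459 — 4 statements merged into one kernel-verified Lean document; each statement's English description precedes it below -/
import Mathlib

section
/- For all real x ≥ 10, x / log x ≤ ∫_2^x dt / log t. -/
open MeasureTheory intervalIntegral

private lemma aux_log_pos {t : ℝ} (ht : 2 ≤ t) : 0 < Real.log t :=
  Real.log_pos (by linarith)

private lemma aux_intOn {a b : ℝ} (ha : 2 ≤ a) (hab : a ≤ b) :
    IntervalIntegrable (fun t => 1 / Real.log t) volume a b := by
  apply ContinuousOn.intervalIntegrable
  have hsub : Set.uIcc a b ⊆ Set.Icc a b := by
    rw [Set.uIcc_of_le hab]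
  apply ContinuousOn.div continuousOn_const
  · exact Real.continuousOn_log.mono (fun t ht => by
      have := (hsub ht).1; simp; linarith)
  · intro t ht
    exact ne_of_gt (aux_log_pos (le_trans ha (hsub ht).1))

private lemma aux_step {a b : ℝ} (ha : 2 ≤ a) (hab : a ≤ b) :
    (b - a) / Real.log b ≤ ∫ t in a..b, 1 / Real.log t := by
  have hb : 2 ≤ b := le_trans ha hab
  have h := intervalIntegral.integral_mono_on (μ := volume) hab
    (_root_.intervalIntegrable_const (c := 1 / Real.log b)) (aux_intOn ha hab)
    (fun t ht => by
      have ht1 : 2 ≤ t := le_trans ha ht.1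
      exact one_div_le_one_div_of_le (aux_log_pos ht1)
        (Real.log_le_log (by linarith) ht.2))
  rw [intervalIntegral.integral_const, smul_eq_mul, mul_one_div] at h
  exact h

private lemma aux_base : 10 / Real.log 10 ≤ ∫ t in (2:ℝ)..10, 1 / Real.log t := by
  have h23 := aux_intOn (a := 2) (b := 3) (by norm_num) (by norm_num)
  have h34 := aux_intOn (a := 3) (b := 4) (by norm_num) (by norm_num)
  have h45 := aux_intOn (a := 4) (b := 5) (by norm_num) (by norm_num)
  have h56 := aux_intOn (a := 5) (b := 6) (by norm_num) (by norm_num)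
  have h67 := aux_intOn (a := 6) (b := 7) (by norm_num) (by norm_num)
  have h78 := aux_intOn (a := 7) (b := 8) (by norm_num) (by norm_num)
  have h89 := aux_intOn (a := 8) (b := 9) (by norm_num) (by norm_num)
  have h910 := aux_intOn (a := 9) (b := 10) (by norm_num) (by norm_num)
  have h310 := ((((((h34.trans h45).trans h56).trans h67).trans h78).trans h89).trans h910)
  have h410 := (((((h45.trans h56).trans h67).trans h78).trans h89).trans h910)
  have h510 := ((((h56.trans h67).trans h78).trans h89).trans h910)
  have h610 := (((h67.trans h78).trans h89).trans h910)
  have h710 := ((h78.trans h89).trans h910)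
  have h810 := (h89.trans h910)
  have esplit : (∫ t in (2:ℝ)..10, 1 / Real.log t) =
      (∫ t in (2:ℝ)..3, 1 / Real.log t) + ((∫ t in (3:ℝ)..4, 1 / Real.log t) +
      ((∫ t in (4:ℝ)..5, 1 / Real.log t) + ((∫ t in (5:ℝ)..6, 1 / Real.log t) +
      ((∫ t in (6:ℝ)..7, 1 / Real.log t) + ((∫ t in (7:ℝ)..8, 1 / Real.log t) +
      ((∫ t in (8:ℝ)..9, 1 / Real.log t) + (∫ t in (9:ℝ)..10, 1 / Real.log t))))))) := by
    rw [intervalIntegral.integral_add_adjacent_intervals h89 h910,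
        intervalIntegral.integral_add_adjacent_intervals h78 h810,
        intervalIntegral.integral_add_adjacent_intervals h67 h710,
        intervalIntegral.integral_add_adjacent_intervals h56 h610,
        intervalIntegral.integral_add_adjacent_intervals h45 h510,
        intervalIntegral.integral_add_adjacent_intervals h34 h410,
        intervalIntegral.integral_add_adjacent_intervals h23 h310]
  have s3 := aux_step (a := 2) (b := 3) (by norm_num) (by norm_num)
  have s4 := aux_step (a := 3) (b := 4) (by norm_num) (by norm_num)
  have s5 := aux_step (a := 4) (b := 5) (by norm_num) (by norm_num)
  have s6 := aux_step (a := 5) (b := 6) (by norm_num) (by norm_num)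
  have s7 := aux_step (a := 6) (b := 7) (by norm_num) (by norm_num)
  have s8 := aux_step (a := 7) (b := 8) (by norm_num) (by norm_num)
  have s9 := aux_step (a := 8) (b := 9) (by norm_num) (by norm_num)
  have s10 := aux_step (a := 9) (b := 10) (by norm_num) (by norm_num)
  -- numeric inequality on logs
  set L := Real.log 2 with hL
  have hLpos : (0:ℝ) < L := aux_log_pos le_rfl
  have l4 : Real.log 4 = 2 * L := by
    rw [show (4:ℝ) = 2^2 by norm_num, Real.log_pow]; push_cast; ring
  have l8 : Real.log 8 = 3 * L := by
    rw [show (8:ℝ) = 2^3 by norm_num, Real.log_pow]; push_cast; ring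
  have l9 : Real.log 9 = 2 * Real.log 3 := by
    rw [show (9:ℝ) = 3^2 by norm_num, Real.log_pow]; push_cast; ring
  have l6 : Real.log 6 = L + Real.log 3 := by
    rw [show (6:ℝ) = 2 * 3 by norm_num, Real.log_mul (by norm_num) (by norm_num)]
  have l10 : Real.log 10 = L + Real.log 5 := by
    rw [show (10:ℝ) = 2 * 5 by norm_num, Real.log_mul (by norm_num) (by norm_num)]
  have ub3 : Real.log 3 ≤ 27 / 17 * L := by
    have h : Real.log (3 ^ 17) ≤ Real.log (2 ^ 27) :=
      Real.log_le_log (by positivity) (by norm_num)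
    rw [Real.log_pow, Real.log_pow] at h; push_cast at h; linarith
  have ub5 : Real.log 5 ≤ 7 / 3 * L := by
    have h : Real.log (5 ^ 3) ≤ Real.log (2 ^ 7) :=
      Real.log_le_log (by positivity) (by norm_num)
    rw [Real.log_pow, Real.log_pow] at h; push_cast at h; linarith
  have lb5 : 23 / 10 * L ≤ Real.log 5 := by
    have h : Real.log (2 ^ 23) ≤ Real.log (5 ^ 10) :=
      Real.log_le_log (by positivity) (by norm_num)
    rw [Real.log_pow, Real.log_pow] at h; push_cast at h; linarith
  have ub7 : Real.log 7 ≤ 20 / 7 * L := by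
    have h : Real.log (7 ^ 7) ≤ Real.log (2 ^ 20) :=
      Real.log_le_log (by positivity) (by norm_num)
    rw [Real.log_pow, Real.log_pow] at h; push_cast at h; linarith
  have p3 : (0:ℝ) < Real.log 3 := aux_log_pos (by norm_num)
  have p5 : (0:ℝ) < Real.log 5 := aux_log_pos (by norm_num)
  have p7 : (0:ℝ) < Real.log 7 := aux_log_pos (by norm_num)
  have r3 : 17 / 27 * (1/L) ≤ 1 / Real.log 3 := by
    rw [show 17 / 27 * (1/L) = 1 / (27/17 * L) by field_simp <;> ring]
    exact one_div_le_one_div_of_le p3 ub3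
  have r4 : 1 / 2 * (1/L) ≤ 1 / Real.log 4 := by
    rw [l4, show 1/2 * (1/L) = 1 / (2*L) by field_simp <;> ring]
  have r5 : 3 / 7 * (1/L) ≤ 1 / Real.log 5 := by
    rw [show 3 / 7 * (1/L) = 1 / (7/3 * L) by field_simp <;> ring]
    exact one_div_le_one_div_of_le p5 ub5
  have r6 : 17 / 44 * (1/L) ≤ 1 / Real.log 6 := by
    rw [show 17 / 44 * (1/L) = 1 / (44/17 * L) by field_simp <;> ring, l6]
    apply one_div_le_one_div_of_le (by linarith)
    linarith
  have r7 : 7 / 20 * (1/L) ≤ 1 / Real.log 7 := by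
    rw [show 7 / 20 * (1/L) = 1 / (20/7 * L) by field_simp <;> ring]
    exact one_div_le_one_div_of_le p7 ub7
  have r8 : 1 / 3 * (1/L) ≤ 1 / Real.log 8 := by
    rw [l8, show 1/3 * (1/L) = 1 / (3*L) by field_simp <;> ring]
  have r9 : 17 / 54 * (1/L) ≤ 1 / Real.log 9 := by
    rw [show 17 / 54 * (1/L) = 1 / (54/17 * L) by field_simp <;> ring, l9]
    apply one_div_le_one_div_of_le (by linarith)
    linarith
  have r10lb : 33 / 10 * L ≤ Real.log 10 := by rw [l10]; linarith
  have p10 : (0:ℝ) < Real.log 10 := aux_log_pos (by norm_num)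
  have r10 : 1 / Real.log 10 ≤ 10 / 33 * (1/L) := by
    rw [show (10:ℝ) / 33 * (1/L) = 1 / (33/10 * L) by field_simp <;> ring]
    exact one_div_le_one_div_of_le (by linarith) r10lb
  have key : 10 / Real.log 10 ≤ 1 / Real.log 3 + 1 / Real.log 4 + 1 / Real.log 5 +
      1 / Real.log 6 + 1 / Real.log 7 + 1 / Real.log 8 + 1 / Real.log 9 +
      1 / Real.log 10 := by
    have hiL : (0:ℝ) ≤ 1/L := by positivity
    have h10 : 10 / Real.log 10 = 10 * (1 / Real.log 10) := by ring
    rw [h10]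
    linarith [r3, r4, r5, r6, r7, r8, r9, r10, hiL]
  rw [esplit]
  have e3 : ((3:ℝ) - 2) / Real.log 3 = 1 / Real.log 3 := by norm_num
  have e4 : ((4:ℝ) - 3) / Real.log 4 = 1 / Real.log 4 := by norm_num
  have e5 : ((5:ℝ) - 4) / Real.log 5 = 1 / Real.log 5 := by norm_num
  have e6 : ((6:ℝ) - 5) / Real.log 6 = 1 / Real.log 6 := by norm_num
  have e7 : ((7:ℝ) - 6) / Real.log 7 = 1 / Real.log 7 := by norm_num
  have e8 : ((8:ℝ) - 7) / Real.log 8 = 1 / Real.log 8 := by norm_num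
  have e9 : ((9:ℝ) - 8) / Real.log 9 = 1 / Real.log 9 := by norm_num
  have e10 : ((10:ℝ) - 9) / Real.log 10 = 1 / Real.log 10 := by norm_num
  rw [e3] at s3; rw [e4] at s4; rw [e5] at s5; rw [e6] at s6
  rw [e7] at s7; rw [e8] at s8; rw [e9] at s9; rw [e10] at s10
  linarith

theorem stmt0 (x : ℝ) (hx : 10 ≤ x) :
    x / Real.log x ≤ ∫ t in (2:ℝ)..x, 1 / Real.log t := by
  have h210 := aux_intOn (a := 2) (b := 10) (by norm_num) (by norm_num)
  have h10x := aux_intOn (a := 10) (b := x) (by norm_num) hx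
  have esplit : (∫ t in (2:ℝ)..x, 1 / Real.log t) =
      (∫ t in (2:ℝ)..10, 1 / Real.log t) + (∫ t in (10:ℝ)..x, 1 / Real.log t) :=
    (intervalIntegral.integral_add_adjacent_intervals h210 h10x).symm
  have hstep := aux_step (a := 10) (b := x) (by norm_num) hx
  have hbase := aux_base
  have p10 : (0:ℝ) < Real.log 10 := aux_log_pos (by norm_num)
  have px : (0:ℝ) < Real.log x := aux_log_pos (by linarith)
  have hmono : Real.log 10 ≤ Real.log x := Real.log_le_log (by norm_num) hx
  have h1 : 10 / Real.log x ≤ 10 / Real.log 10 :=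
    div_le_div_of_nonneg_left (by norm_num) p10 hmono
  have h2 : x / Real.log x = 10 / Real.log x + (x - 10) / Real.log x := by ring
  rw [esplit, h2]
  linarith
end

section
/- Let a, b > 0 with ab > 1. If x ≥ (ab)^(a(√(2/log(ab)) + 1)), then x^(1/a) / log x ≥ b. -/
/-! Put `L = log (ab)` and `t = log x / a`, so that the claim reads `ab · t ≤ eᵗ`. The hypothesis
gives `t ≥ L + s` with `s ≥ √(2L)`, i.e. `L ≤ s² / 2`, hence `t ≤ 1 + s + s² / 2 ≤ eˢ`, and
multiplying by `eᴸ = ab` gives the claim. -/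

open Real

lemma Real.sqrt_div_mul_self (c : ℝ) {L : ℝ} (hL : 0 ≤ L) : √(c / L) * L = √(c * L) := by
  rcases hL.eq_or_lt with rfl | hL
  · simp
  calc √(c / L) * L = √(c / L) * √(L ^ 2) := by rw [sqrt_sq hL.le]
    _ = √(c / L * L ^ 2) := (sqrt_mul' _ (sq_nonneg L)).symm
    _ = √(c * L) := by congr 1; field_simp

lemma Real.exp_mul_le_exp_of_sqrt_two_mul_add_le {L t : ℝ} (h : √(2 * L) + L ≤ t) :
    exp L * t ≤ exp t := by
  obtain ⟨hs, hL⟩ : 0 ≤ t - L ∧ 2 * L ≤ (t - L) ^ 2 := sqrt_le_iff.mp (by linarith)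
  have ht : t ≤ exp (t - L) := by nlinarith [quadratic_le_exp_of_nonneg hs]
  calc exp L * t ≤ exp L * exp (t - L) := by gcongr
    _ = exp t := by rw [← exp_add, add_sub_cancel]

theorem stmt1_general (a b x : ℝ) (ha : 0 < a) (hab : 1 < a * b)
    (hx : (a * b) ^ (a * (Real.sqrt (2 / Real.log (a * b)) + 1)) ≤ x) :
    b ≤ x ^ (1 / a) / Real.log x := by
  set L := log (a * b)
  have hab0 : 0 < a * b := by linarith
  have hL : 0 < L := log_pos hab
  have hx0 : 0 < x := (rpow_pos_of_pos hab0 _).trans_le hx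
  have hlog : a * (√(2 * L) + L) ≤ log x := by
    have := log_le_log (rpow_pos_of_pos hab0 _) hx
    rwa [log_rpow hab0, mul_assoc, add_mul, sqrt_div_mul_self 2 hL.le, one_mul] at this
  have hlogx : 0 < log x := lt_of_lt_of_le (by positivity) hlog
  have key := exp_mul_le_exp_of_sqrt_two_mul_add_le ((le_div_iff₀' ha).mpr hlog)
  rw [exp_log hab0] at key
  rw [le_div_iff₀ hlogx, rpow_def_of_pos hx0, mul_one_div]
  calc b * log x = a * b * (log x / a) := by field_simp
    _ ≤ exp (log x / a) := key

theorem stmt1 (a b x : ℝ) (ha : 0 < a) (hb : 0 < b) (hab : 1 < a * b) (hx1 : 1 < x)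
    (hx : (a * b) ^ (a * (Real.sqrt (2 / Real.log (a * b)) + 1)) ≤ x) :
    b ≤ x ^ (1 / a) / Real.log x :=
  stmt1_general a b x ha hab hx
end

section
/- Let q be a positive integer and S ⊆ (ℤ/qℤ)^× a set of residue classes. Suppose π_E(x,0) ≤ 17857 + (2(x - 10^11 + 10))/(4 log((x - 10^11 + 10)/5)) for all x > 10^11. Prove the general integral comparison: if X_0 > 2q > 0 and X_1 > X_0, then ∫_{X_0}^{X_1} (x - X_0 + 2q)/(x(x+1) log((x - X_0 + 2q)/q)) dx < ∫_2^{X_1/q} x/((x + X_0/q - 2)^2 log x) dx. -/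
/-!
The substitution `x = q u + X₀ - 2q` maps `[X₀, X₁]` onto `[2, (X₁ - X₀)/q + 2]` and turns the
left integrand into `q² u / (A (A + 1) log u)` with `A = q u + X₀ - 2q = q (u + X₀/q - 2)`.
This is strictly smaller than the right integrand `q² u / (A² log u)`, and the right integrand is
nonnegative, so enlarging its range of integration to `[2, X₁/q]` only increases it.
-/

open Real Set intervalIntegral

theorem integral_lt_integral_extend_right {f g : ℝ → ℝ} {a b c : ℝ} (hab : a < b) (hbc : b ≤ c)
    (hf : ContinuousOn f (Icc a b)) (hg : ContinuousOn g (Icc a c))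
    (hlt : ∀ x ∈ Icc a b, f x < g x) (hg_nonneg : ∀ x ∈ Ioc a c, 0 ≤ g x) :
    ∫ x in a..b, f x < ∫ x in a..c, g x :=
  calc ∫ x in a..b, f x
      < ∫ x in a..b, g x :=
        integral_lt_integral_of_continuousOn_of_le_of_exists_lt hab hf
          (hg.mono (Icc_subset_Icc_right hbc)) (fun x hx => (hlt x (Ioc_subset_Icc_self hx)).le)
          ⟨a, left_mem_Icc.2 hab.le, hlt a (left_mem_Icc.2 hab.le)⟩
    _ ≤ ∫ x in a..c, g x :=
        integral_mono_interval le_rfl hab.le hbc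
          (MeasureTheory.ae_restrict_of_forall_mem measurableSet_Ioc hg_nonneg)
          (hg.intervalIntegrable_of_Icc (hab.le.trans hbc))

theorem continuousOn_div_mul_log {p r : ℝ → ℝ} (hp : Continuous p) (hr : Continuous r)
    (hr0 : ∀ u, 1 < u → r u ≠ 0) : ContinuousOn (fun u => p u / (r u * log u)) (Ioi 1) :=
  hp.continuousOn.div
    (hr.continuousOn.mul (continuousOn_log.mono fun _ hu => ne_of_gt (one_pos.trans hu)))
    fun u hu => mul_ne_zero (hr0 u hu) (log_pos hu).ne'

noncomputable def substitutedIntegrand (q X₀ u : ℝ) : ℝ :=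
  q ^ 2 * u / ((q * u + X₀ - 2 * q) * (q * u + X₀ - 2 * q + 1) * log u)

theorem integral_eq_integral_substitutedIntegrand {q : ℝ} (hq : q ≠ 0) (X₀ X₁ : ℝ) :
    ∫ x in X₀..X₁, (x - X₀ + 2 * q) / (x * (x + 1) * log ((x - X₀ + 2 * q) / q)) =
      ∫ u in (2 : ℝ)..((X₁ - X₀) / q + 2), substitutedIntegrand q X₀ u := by
  set F : ℝ → ℝ := fun x => (x - X₀ + 2 * q) / (x * (x + 1) * log ((x - X₀ + 2 * q) / q))
  have hF : ∀ u, q * F (q * u + (X₀ - 2 * q)) = substitutedIntegrand q X₀ u := fun u => by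
    simp only [F]
    rw [substitutedIntegrand, show q * u + (X₀ - 2 * q) - X₀ + 2 * q = q * u by ring,
      mul_div_cancel_left₀ _ hq]
    ring
  rw [← integral_congr fun u _ => hF u, integral_const_mul, integral_comp_mul_add F hq,
    show q * 2 + (X₀ - 2 * q) = X₀ by ring,
    show q * ((X₁ - X₀) / q + 2) + (X₀ - 2 * q) = X₁ by field_simp; ring,
    smul_eq_mul, mul_inv_cancel_left₀ hq]

theorem substitutedIntegrand_lt {q X₀ u : ℝ} (hq : 0 < q) (hX₀ : 2 * q < X₀) (hu : 1 < u) :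
    substitutedIntegrand q X₀ u < u / ((u + X₀ / q - 2) ^ 2 * log u) := by
  have hA : 0 < q * u + X₀ - 2 * q := by nlinarith
  have hlog : 0 < log u := log_pos hu
  have hrhs : u / ((u + X₀ / q - 2) ^ 2 * log u) =
      q ^ 2 * u / ((q * u + X₀ - 2 * q) ^ 2 * log u) := by
    rw [show q * u + X₀ - 2 * q = q * (u + X₀ / q - 2) by field_simp]
    field_simp
  rw [substitutedIntegrand, hrhs]
  apply div_lt_div_of_pos_left (by positivity) (by positivity)
  nlinarith [mul_pos hA hlog]

theorem stmt10_general (X₀ X₁ q : ℝ) (hq : 0 < q) (hX₀ : 2 * q < X₀) (hX₁ : X₀ < X₁) :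
    (∫ x in X₀..X₁, (x - X₀ + 2 * q) / (x * (x + 1) * Real.log ((x - X₀ + 2 * q) / q))) <
      ∫ x in (2:ℝ)..(X₁ / q), x / ((x + X₀ / q - 2) ^ 2 * Real.log x) := by
  have h2 : 2 < X₀ / q := by rwa [lt_div_iff₀ hq]
  have hu₁ : 2 < (X₁ - X₀) / q + 2 := by have := div_pos (sub_pos.2 hX₁) hq; linarith
  have hu₁_le : (X₁ - X₀) / q + 2 ≤ X₁ / q := by rw [sub_div]; linarith
  have hIoi : ∀ {b : ℝ}, Icc 2 b ⊆ Ioi 1 := fun hu => lt_of_lt_of_le one_lt_two hu.1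
  rw [integral_eq_integral_substitutedIntegrand hq.ne']
  refine integral_lt_integral_extend_right hu₁ hu₁_le ?_ ?_
    (fun u hu => substitutedIntegrand_lt hq hX₀ (one_lt_two.trans_le hu.1)) fun u hu => ?_
  · refine (continuousOn_div_mul_log (by fun_prop) (by fun_prop) fun u hu => ?_).mono hIoi
    have hA : 0 < q * u + X₀ - 2 * q := by nlinarith
    positivity
  · refine (continuousOn_div_mul_log (by fun_prop) (by fun_prop) fun u hu => ?_).mono hIoi
    have hB : 0 < u + X₀ / q - 2 := by linarith
    positivity
  · have hB : 0 < u + X₀ / q - 2 := by linarith [hu.1]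
    have hlog := log_pos (one_lt_two.trans hu.1)
    have hu₀ : 0 < u := by linarith [hu.1]
    positivity

theorem stmt10 (n : ℕ) (hn : 0 < n) (S : Set ((ZMod n)ˣ)) (πE : ℝ → ℝ)
    (hπE : ∀ x : ℝ, 10 ^ 11 < x →
      πE x ≤ 17857 + 2 * (x - 10 ^ 11 + 10) / (4 * Real.log ((x - 10 ^ 11 + 10) / 5)))
    (X₀ X₁ q : ℝ) (hq : 0 < q) (hX₀ : 2 * q < X₀) (hX₁ : X₀ < X₁) :
    (∫ x in X₀..X₁, (x - X₀ + 2 * q) / (x * (x + 1) * Real.log ((x - X₀ + 2 * q) / q))) <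
      ∫ x in (2:ℝ)..(X₁ / q), x / ((x + X₀ / q - 2) ^ 2 * Real.log x) :=
  stmt10_general X₀ X₁ q hq hX₀ hX₁
end

section
/- Let m be an integral ideal of a number field K of degree n, let σ > 0 and M > 1 be real. Suppose m has ω(m) distinct prime ideal divisors, and that for each rational prime p there are at most n prime ideals of K above p. Then, provided ω(m) ≥ n·π(M-1), ∏_{𝔭 | m} (1 + N𝔭^{-σ}) ≤ (1 + M^{-σ})^{ω(m) - n·π(M-1)} · ∏_{p < M} (1 + p^{-σ})^n, where π(M-1) is the number of rational primes ≤ M-1 and the first product is over the distinct prime ideal divisors of m. -/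
open scoped Classical in
theorem stmt17 (K : Type*) [Field K] [NumberField K]
    (n : ℕ) (hn : n = Module.finrank ℚ K)
    (m : Ideal (NumberField.RingOfIntegers K)) (hm : m ≠ 0)
    (P : Finset (Ideal (NumberField.RingOfIntegers K)))
    (hP : ∀ 𝔭, 𝔭 ∈ P ↔ 𝔭.IsPrime ∧ 𝔭 ≠ ⊥ ∧ 𝔭 ∣ m)
    (σ M : ℝ) (hσ : 0 < σ) (hM : 1 < M)
    (πM : ℕ) (hπM : πM = Nat.card {p : ℕ // p.Prime ∧ (p : ℝ) ≤ M - 1})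
    (habove : ∀ p : ℕ, p.Prime →
      (P.filter (fun 𝔭 => ∃ k : ℕ, Ideal.absNorm 𝔭 = p ^ k)).card ≤ n)
    (hsmall : ∀ 𝔭 ∈ P, (Ideal.absNorm 𝔭 : ℝ) < M →
      ∃ p : ℕ, p.Prime ∧ (p : ℝ) < M ∧ ∃ k : ℕ, Ideal.absNorm 𝔭 = p ^ k)
    (hω : n * πM ≤ P.card) :
    ∏ 𝔭 ∈ P, (1 + (Ideal.absNorm 𝔭 : ℝ) ^ (-σ)) ≤
      (1 + M ^ (-σ)) ^ (P.card - n * πM) *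
        ∏ p ∈ (Finset.range (⌈M⌉₊ + 1)).filter (fun p : ℕ => Nat.Prime p ∧ (p : ℝ) < M),
          (1 + (p : ℝ) ^ (-σ)) ^ n := by
  classical
  have hM0 : (0:ℝ) < M := by linarith
  set A : ℝ := 1 + M ^ (-σ) with hAdef
  have hMσ : (0:ℝ) < M ^ (-σ) := Real.rpow_pos_of_pos hM0 _
  have hA1 : (1:ℝ) ≤ A := by simp only [hAdef]; linarith
  have hA0 : (0:ℝ) < A := by linarith
  -- monotonicity of x ↦ x ^ (-σ)
  have key : ∀ x y : ℝ, 0 < x → x ≤ y → y ^ (-σ) ≤ x ^ (-σ) := by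
    intro x y hx hxy
    rw [Real.rpow_neg hx.le, Real.rpow_neg (by linarith)]
    have h1 : (0:ℝ) < x ^ σ := Real.rpow_pos_of_pos hx _
    have h2 : x ^ σ ≤ y ^ σ := Real.rpow_le_rpow hx.le hxy hσ.le
    exact inv_anti₀ h1 h2
  set F : Ideal (NumberField.RingOfIntegers K) → ℝ :=
    fun 𝔭 => 1 + (Ideal.absNorm 𝔭 : ℝ) ^ (-σ) with hFdef
  have hnorm2 : ∀ 𝔭 ∈ P, 2 ≤ Ideal.absNorm 𝔭 := by
    intro 𝔭 h𝔭
    obtain ⟨hpr, hbot, -⟩ := (hP 𝔭).mp h𝔭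
    have h0 : Ideal.absNorm 𝔭 ≠ 0 := by
      simpa [Ideal.absNorm_eq_zero_iff] using hbot
    have h1 : Ideal.absNorm 𝔭 ≠ 1 := by
      simpa [Ideal.absNorm_eq_one_iff] using hpr.ne_top
    omega
  have hF0 : ∀ 𝔭, 0 ≤ F 𝔭 := by
    intro 𝔭
    have : (0:ℝ) ≤ (Ideal.absNorm 𝔭 : ℝ) ^ (-σ) := Real.rpow_nonneg (by positivity) _
    simp only [hFdef]; linarith
  set Q : Finset ℕ :=
    (Finset.range (⌈M⌉₊ + 1)).filter (fun p : ℕ => Nat.Prime p ∧ (p : ℝ) < M) with hQdef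
  set Sm : Finset (Ideal (NumberField.RingOfIntegers K)) :=
    P.filter (fun 𝔭 => (Ideal.absNorm 𝔭 : ℝ) < M) with hSmdef
  set Lg : Finset (Ideal (NumberField.RingOfIntegers K)) :=
    P.filter (fun 𝔭 => ¬ (Ideal.absNorm 𝔭 : ℝ) < M) with hLgdef
  have hex : ∀ 𝔭 ∈ Sm, ∃ p : ℕ, p.Prime ∧ (p : ℝ) < M ∧ ∃ k : ℕ, Ideal.absNorm 𝔭 = p ^ k := by
    intro 𝔭 h𝔭
    have h := Finset.mem_filter.mp h𝔭
    exact hsmall 𝔭 h.1 h.2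
  set g : Ideal (NumberField.RingOfIntegers K) → ℕ := fun 𝔭 =>
    if h : ∃ p : ℕ, p.Prime ∧ (p : ℝ) < M ∧ ∃ k : ℕ, Ideal.absNorm 𝔭 = p ^ k
    then h.choose else 0 with hgdef
  have hg : ∀ 𝔭 ∈ Sm, (g 𝔭).Prime ∧ ((g 𝔭 : ℝ) < M) ∧
      ∃ k : ℕ, Ideal.absNorm 𝔭 = (g 𝔭) ^ k := by
    intro 𝔭 h𝔭
    have h := hex 𝔭 h𝔭
    simp only [hgdef, dif_pos h]
    exact h.choose_spec
  have hgmem : ∀ 𝔭 ∈ Sm, g 𝔭 ∈ Q := by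
    intro 𝔭 h𝔭
    obtain ⟨hp, hlt, -⟩ := hg 𝔭 h𝔭
    have hceil : M ≤ (⌈M⌉₊ : ℝ) := Nat.le_ceil M
    have h1 : (g 𝔭 : ℝ) < ((⌈M⌉₊ + 1 : ℕ) : ℝ) := by push_cast; linarith
    have h2 : g 𝔭 < ⌈M⌉₊ + 1 := by exact_mod_cast h1
    simp only [hQdef, Finset.mem_filter, Finset.mem_range]
    exact ⟨h2, hp, hlt⟩
  set c : ℕ → ℕ := fun p => (Sm.filter (fun 𝔭 => g 𝔭 = p)).card with hcdef
  -- fiber product bound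
  have hsmall_bd : ∏ 𝔭 ∈ Sm, F 𝔭 ≤ ∏ p ∈ Q, (1 + (p : ℝ) ^ (-σ)) ^ (c p) := by
    rw [← Finset.prod_fiberwise_of_maps_to hgmem F]
    apply Finset.prod_le_prod
    · intro p _; exact Finset.prod_nonneg fun 𝔭 _ => hF0 𝔭
    · intro p hp
      have := Finset.prod_const (b := 1 + (p : ℝ) ^ (-σ))
        (s := Sm.filter (fun 𝔭 => g 𝔭 = p))
      rw [hcdef, ← this]
      apply Finset.prod_le_prod (fun 𝔭 _ => hF0 𝔭)
      intro 𝔭 h𝔭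
      obtain ⟨h𝔭Sm, hg𝔭⟩ := Finset.mem_filter.mp h𝔭
      obtain ⟨hpp, hplt, k, hk⟩ := hg 𝔭 h𝔭Sm
      have h2 : 2 ≤ Ideal.absNorm 𝔭 := hnorm2 𝔭 (Finset.mem_filter.mp h𝔭Sm).1
      have hk0 : k ≠ 0 := by
        rintro rfl; rw [pow_zero] at hk; omega
      have hle : g 𝔭 ≤ Ideal.absNorm 𝔭 := by
        rw [hk]; exact Nat.le_self_pow hk0 _
      have hpos : (0:ℝ) < (g 𝔭 : ℝ) := by exact_mod_cast hpp.pos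
      have := key (g 𝔭 : ℝ) (Ideal.absNorm 𝔭 : ℝ) hpos (by exact_mod_cast hle)
      rw [← hg𝔭]
      simp only [hFdef]
      linarith
  -- fiber cardinality bound
  have hcn : ∀ p ∈ Q, c p ≤ n := by
    intro p hp
    have hpp : p.Prime := ((Finset.mem_filter.mp hp).2).1
    refine le_trans (Finset.card_le_card ?_) (habove p hpp)
    intro 𝔭 h𝔭
    obtain ⟨h𝔭Sm, hg𝔭⟩ := Finset.mem_filter.mp h𝔭
    obtain ⟨-, -, k, hk⟩ := hg 𝔭 h𝔭Sm
    exact Finset.mem_filter.mpr ⟨(Finset.mem_filter.mp h𝔭Sm).1, k, by rw [hk, hg𝔭]⟩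
  have hsum : ∑ p ∈ Q, c p = Sm.card := (Finset.card_eq_sum_card_fiberwise hgmem).symm
  -- large primes bound
  have hlg_bd : ∏ 𝔭 ∈ Lg, F 𝔭 ≤ A ^ Lg.card := by
    rw [← Finset.prod_const]
    apply Finset.prod_le_prod (fun 𝔭 _ => hF0 𝔭)
    intro 𝔭 h𝔭
    obtain ⟨h𝔭P, hge⟩ := Finset.mem_filter.mp h𝔭
    have := key M (Ideal.absNorm 𝔭 : ℝ) hM0 (not_lt.mp hge)
    simp only [hFdef, hAdef]; linarith
  -- πM as a finset card
  set Q' : Finset ℕ := Q.filter (fun p => (p : ℝ) ≤ M - 1) with hQ'def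
  have hπ : πM = Q'.card := by
    rw [hπM]
    have hset : {p : ℕ | p.Prime ∧ (p : ℝ) ≤ M - 1} = ↑Q' := by
      ext p
      simp only [Set.mem_setOf_eq, Finset.coe_filter, hQ'def, hQdef, Finset.mem_filter,
        Finset.mem_range, Set.mem_setOf_eq]
      constructor
      · rintro ⟨hpp, hple⟩
        have hplt : (p : ℝ) < M := by linarith
        have hceil : M ≤ (⌈M⌉₊ : ℝ) := Nat.le_ceil M
        have h1 : (p : ℝ) < ((⌈M⌉₊ + 1 : ℕ) : ℝ) := by push_cast; linarith
        exact ⟨⟨by exact_mod_cast h1, hpp, hplt⟩, hple⟩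
      · rintro ⟨⟨-, hpp, -⟩, hple⟩
        exact ⟨hpp, hple⟩
    calc Nat.card {p : ℕ // p.Prime ∧ (p : ℝ) ≤ M - 1}
        = Nat.card {p : ℕ | p.Prime ∧ (p : ℝ) ≤ M - 1} := rfl
      _ = ({p : ℕ | p.Prime ∧ (p : ℝ) ≤ M - 1} : Set ℕ).ncard := Nat.card_coe_set_eq _
      _ = (↑Q' : Set ℕ).ncard := by rw [hset]
      _ = Q'.card := Set.ncard_coe_finset _
  have hQ'sub : Q' ⊆ Q := Finset.filter_subset _ _
  -- combine
  have hsum' : ∑ p ∈ Q', c p ≤ Sm.card := by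
    rw [← hsum]
    exact Finset.sum_le_sum_of_subset hQ'sub
  have hnsum : (∑ p ∈ Q', (n - c p)) + ∑ p ∈ Q', c p = n * πM := by
    rw [← Finset.sum_add_distrib,
      Finset.sum_congr rfl (fun p hp => Nat.sub_add_cancel (hcn p (hQ'sub hp))),
      Finset.sum_const, smul_eq_mul, hπ, mul_comm]
  have hcards : Sm.card + Lg.card = P.card := Finset.card_filter_add_card_filter_not _
  have hexp : Lg.card ≤ (P.card - n * πM) + ∑ p ∈ Q', (n - c p) := by omega
  have hApow : A ^ Lg.card ≤ A ^ ((P.card - n * πM) + ∑ p ∈ Q', (n - c p)) :=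
    pow_le_pow_right₀ hA1 hexp
  -- bound A-powers by the small-prime factors on Q'
  have hAQ' : A ^ (∑ p ∈ Q', (n - c p)) ≤ ∏ p ∈ Q, A ^ (n - c p) := by
    rw [Finset.prod_pow_eq_pow_sum Q (fun p => n - c p) A]
    exact pow_le_pow_right₀ hA1 (Finset.sum_le_sum_of_subset hQ'sub)
  have hQfac : ∀ p ∈ Q, A ^ (n - c p) ≤ (1 + (p : ℝ) ^ (-σ)) ^ (n - c p) := by
    intro p hp
    obtain ⟨hrange, hpp, hplt⟩ := Finset.mem_filter.mp hp
    have hpos : (0:ℝ) < (p : ℝ) := by exact_mod_cast hpp.pos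
    have := key (p : ℝ) M hpos hplt.le
    exact pow_le_pow_left₀ hA0.le (by simp only [hAdef]; linarith) _
  have hfinal : (∏ p ∈ Q, (1 + (p : ℝ) ^ (-σ)) ^ (c p)) * A ^ (∑ p ∈ Q', (n - c p)) ≤
      ∏ p ∈ Q, (1 + (p : ℝ) ^ (-σ)) ^ n := by
    have hQn : ∏ p ∈ Q, (1 + (p : ℝ) ^ (-σ)) ^ n =
        (∏ p ∈ Q, (1 + (p : ℝ) ^ (-σ)) ^ (c p)) *
          ∏ p ∈ Q, (1 + (p : ℝ) ^ (-σ)) ^ (n - c p) := by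
      rw [← Finset.prod_mul_distrib]
      refine Finset.prod_congr rfl fun p hp => ?_
      rw [← pow_add, Nat.add_sub_cancel' (hcn p hp)]
    rw [hQn]
    have hcpos : (0:ℝ) ≤ ∏ p ∈ Q, (1 + (p : ℝ) ^ (-σ)) ^ (c p) := by
      apply Finset.prod_nonneg
      intro p hp
      have hpos : (0:ℝ) ≤ (p:ℝ) ^ (-σ) := Real.rpow_nonneg (by positivity) _
      positivity
    apply mul_le_mul_of_nonneg_left _ hcpos
    calc A ^ (∑ p ∈ Q', (n - c p)) ≤ ∏ p ∈ Q, A ^ (n - c p) := hAQ'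
      _ ≤ ∏ p ∈ Q, (1 + (p : ℝ) ^ (-σ)) ^ (n - c p) :=
        Finset.prod_le_prod (fun p _ => pow_nonneg hA0.le _) hQfac
  -- final chain
  have hPsplit : ∏ 𝔭 ∈ P, F 𝔭 = (∏ 𝔭 ∈ Sm, F 𝔭) * ∏ 𝔭 ∈ Lg, F 𝔭 :=
    (Finset.prod_filter_mul_prod_filter_not P _ F).symm
  have hQprodpos : (0:ℝ) ≤ ∏ p ∈ Q, (1 + (p : ℝ) ^ (-σ)) ^ (c p) := by
    apply Finset.prod_nonneg
    intro p hp
    have hpos : (0:ℝ) ≤ (p:ℝ) ^ (-σ) := Real.rpow_nonneg (by positivity) _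
    positivity
  calc ∏ 𝔭 ∈ P, F 𝔭 = (∏ 𝔭 ∈ Sm, F 𝔭) * ∏ 𝔭 ∈ Lg, F 𝔭 := hPsplit
    _ ≤ (∏ p ∈ Q, (1 + (p : ℝ) ^ (-σ)) ^ (c p)) * A ^ Lg.card := by
        apply mul_le_mul hsmall_bd hlg_bd
          (Finset.prod_nonneg fun 𝔭 _ => hF0 𝔭) hQprodpos
    _ ≤ (∏ p ∈ Q, (1 + (p : ℝ) ^ (-σ)) ^ (c p)) *
          (A ^ (P.card - n * πM) * A ^ (∑ p ∈ Q', (n - c p))) := by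
        rw [← pow_add]
        exact mul_le_mul_of_nonneg_left hApow hQprodpos
    _ = A ^ (P.card - n * πM) *
          ((∏ p ∈ Q, (1 + (p : ℝ) ^ (-σ)) ^ (c p)) * A ^ (∑ p ∈ Q', (n - c p))) := by ring
    _ ≤ A ^ (P.card - n * πM) * ∏ p ∈ Q, (1 + (p : ℝ) ^ (-σ)) ^ n := by
        exact mul_le_mul_of_nonneg_left hfinal (pow_nonneg hA0.le _)
end
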